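/- Let d ≥ 2 be an integer and k_1, k_2, k_3 integers with 1 ≤ k_j ≤ d−1. Set x_j = exp(2πi k_j/d) and let h be the 2×2 complex matrix with entries h(1,1) = (1−x_1x_2)/((1−x_1)(1−x_2)), h(1,2) = −x_2/(1−x_2), h(2,1) = −1/(1−x_2), h(2,2) = (1−x_2x_3)/((1−x_2)(1−x_3)). Then det h = (1−x_1x_2x_3)/((1−x_1)(1−x_2)(1−x_3)) = −(1/4) · sin(π(k_1+k_2+k_3)/d) / (sin(πk_1/d) · sin(πk_2/d) · sin(πk_3/d)). -/

import Mathlib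

/-!
The determinant is a rational function of `x₁, x₂, x₃`; clearing the denominators
`(1 - x₁)(1 - x₂)²(1 - x₃)` it factors as `(1 - x₂)(1 - x₁x₂x₃)`, which gives the first
formula. For the second, write `x_j = e^{2iθ_j}` with `θ_j = πk_j/d`, so that
`1 - x_j = -2i sin θ_j e^{iθ_j}` and `1 - x₁x₂x₃ = -2i sin(θ₁ + θ₂ + θ₃) e^{i(θ₁ + θ₂ + θ₃)}`:
the phases cancel and `(-2i)⁻² = -1/4` remains.
-/

open Matrix

/-- The skew-Hermitian matrix `h` built from `x_j = exp(2πi k_j / d)`. -/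
noncomputable def hMat (d : ℕ) (k : Fin 3 → ℤ) : Matrix (Fin 2) (Fin 2) ℂ :=
  let x : Fin 3 → ℂ := fun j => Complex.exp (2 * Real.pi * Complex.I * ((k j : ℂ)) / d)
  !![(1 - x 0 * x 1) / ((1 - x 0) * (1 - x 1)), -(x 1) / (1 - x 1);
     -1 / (1 - x 1), (1 - x 1 * x 2) / ((1 - x 1) * (1 - x 2))]

/-- `hMat d k` unfolds to `hMatrix x₀ x₁ x₂`. -/
def hMatrix {K : Type*} [Field K] (x y z : K) : Matrix (Fin 2) (Fin 2) K :=
  !![(1 - x * y) / ((1 - x) * (1 - y)), -y / (1 - y);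
     -1 / (1 - y), (1 - y * z) / ((1 - y) * (1 - z))]

lemma det_hMatrix {K : Type*} [Field K] {x y z : K} (hx : x ≠ 1) (hy : y ≠ 1) (hz : z ≠ 1) :
    (hMatrix x y z).det = (1 - x * y * z) / ((1 - x) * (1 - y) * (1 - z)) := by
  have hx' : 1 - x ≠ 0 := sub_ne_zero.mpr hx.symm
  have hy' : 1 - y ≠ 0 := sub_ne_zero.mpr hy.symm
  have hz' : 1 - z ≠ 0 := sub_ne_zero.mpr hz.symm
  rw [hMatrix, det_fin_two_of]
  field_simp
  ring

section

open Complex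

lemma one_sub_exp_two_mul_mul_I (z : ℂ) :
    1 - exp (2 * z * I) = -2 * I * sin z * exp (z * I) := by
  have hsq : exp (z * I) * exp (z * I) = exp (2 * z * I) := by rw [← exp_add]; ring_nf
  have hinv : exp (-z * I) * exp (z * I) = 1 := by rw [← exp_add]; simp
  rw [sin]
  linear_combination hsq - hinv + (exp (-z * I) - exp (z * I)) * exp (z * I) * I_mul_I

lemma one_sub_exp_prod_div (a b c : ℂ) :
    (1 - exp (2 * a * I) * exp (2 * b * I) * exp (2 * c * I)) /
        ((1 - exp (2 * a * I)) * (1 - exp (2 * b * I)) * (1 - exp (2 * c * I))) =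
      -(1 / 4) * sin (a + b + c) / (sin a * sin b * sin c) := by
  have hprod : exp (2 * a * I) * exp (2 * b * I) * exp (2 * c * I) = exp (2 * (a + b + c) * I) := by
    rw [← exp_add, ← exp_add]; ring_nf
  have hE : exp ((a + b + c) * I) = exp (a * I) * exp (b * I) * exp (c * I) := by
    rw [← exp_add, ← exp_add]; ring_nf
  have hE0 : exp (a * I) * exp (b * I) * exp (c * I) ≠ 0 := by simp [exp_ne_zero]
  have h2I : (-2 * I : ℂ) ≠ 0 := by simp
  rw [hprod, one_sub_exp_two_mul_mul_I, one_sub_exp_two_mul_mul_I, one_sub_exp_two_mul_mul_I,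
    one_sub_exp_two_mul_mul_I, hE]
  calc _ = (-2 * I * sin (a + b + c)) * (exp (a * I) * exp (b * I) * exp (c * I)) /
        ((-2 * I) * ((-2 * I) * (-2 * I) * (sin a * sin b * sin c))
          * (exp (a * I) * exp (b * I) * exp (c * I))) := by ring
    _ = sin (a + b + c) / ((-2 * I) * (-2 * I) * (sin a * sin b * sin c)) := by
      rw [mul_div_mul_right _ _ hE0, mul_div_mul_left _ _ h2I]
    _ = _ := by
      rw [show (-2 * I) * (-2 * I) = (-4 : ℂ) by linear_combination 4 * I_mul_I]; ring

lemma sin_pi_mul_div_pos {k : ℤ} {d : ℕ} (hk : 1 ≤ k ∧ k ≤ (d : ℤ) - 1) :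
    0 < Real.sin (Real.pi * k / d) := by
  obtain ⟨h1, h2⟩ := hk
  have hk0 : (0 : ℝ) < k := by exact_mod_cast h1
  have hkd : (k : ℝ) < d := by exact_mod_cast (by omega : k < (d : ℤ))
  apply Real.sin_pos_of_pos_of_lt_pi (div_pos (mul_pos Real.pi_pos hk0) (hk0.trans hkd))
  rw [div_lt_iff₀ (hk0.trans hkd)]
  nlinarith [Real.pi_pos]

lemma two_pi_I_mul_div (k : ℤ) (d : ℕ) :
    2 * Real.pi * I * k / d = 2 * ((Real.pi * k / d : ℝ) : ℂ) * I := by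
  push_cast; ring

lemma exp_two_pi_I_mul_div_ne_one {k : ℤ} {d : ℕ} (hk : 1 ≤ k ∧ k ≤ (d : ℤ) - 1) :
    exp (2 * Real.pi * I * k / d) ≠ 1 := by
  rw [ne_comm, ← sub_ne_zero, two_pi_I_mul_div, one_sub_exp_two_mul_mul_I, ← ofReal_sin]
  exact mul_ne_zero (mul_ne_zero (by simp) (ofReal_ne_zero.mpr (sin_pi_mul_div_pos hk).ne'))
    (exp_ne_zero _)

end

theorem det_hMat_general (d : ℕ) (k : Fin 3 → ℤ)
    (hk : ∀ j, 1 ≤ k j ∧ k j ≤ (d : ℤ) - 1) :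
    (hMat d k).det =
      (1 - Complex.exp (2 * Real.pi * Complex.I * ((k 0 : ℂ)) / d) *
        Complex.exp (2 * Real.pi * Complex.I * ((k 1 : ℂ)) / d) *
        Complex.exp (2 * Real.pi * Complex.I * ((k 2 : ℂ)) / d)) /
      ((1 - Complex.exp (2 * Real.pi * Complex.I * ((k 0 : ℂ)) / d)) *
       (1 - Complex.exp (2 * Real.pi * Complex.I * ((k 1 : ℂ)) / d)) *
       (1 - Complex.exp (2 * Real.pi * Complex.I * ((k 2 : ℂ)) / d))) ∧
    (hMat d k).det =
      ((-(1 / 4) * Real.sin (Real.pi * ((k 0 : ℝ) + (k 1 : ℝ) + (k 2 : ℝ)) / d) /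
        (Real.sin (Real.pi * (k 0 : ℝ) / d) * Real.sin (Real.pi * (k 1 : ℝ) / d) *
         Real.sin (Real.pi * (k 2 : ℝ) / d)) : ℝ) : ℂ) := by
  have hdet : (hMat d k).det = _ :=
    det_hMatrix (exp_two_pi_I_mul_div_ne_one (hk 0)) (exp_two_pi_I_mul_div_ne_one (hk 1))
      (exp_two_pi_I_mul_div_ne_one (hk 2))
  beta_reduce at hdet
  refine ⟨hdet, ?_⟩
  rw [hdet, two_pi_I_mul_div, two_pi_I_mul_div, two_pi_I_mul_div, one_sub_exp_prod_div]
  push_cast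
  ring_nf

theorem det_hMat (d : ℕ) (hd : 2 ≤ d) (k : Fin 3 → ℤ)
    (hk : ∀ j, 1 ≤ k j ∧ k j ≤ (d : ℤ) - 1) :
    (hMat d k).det =
      (1 - Complex.exp (2 * Real.pi * Complex.I * ((k 0 : ℂ)) / d) *
        Complex.exp (2 * Real.pi * Complex.I * ((k 1 : ℂ)) / d) *
        Complex.exp (2 * Real.pi * Complex.I * ((k 2 : ℂ)) / d)) /
      ((1 - Complex.exp (2 * Real.pi * Complex.I * ((k 0 : ℂ)) / d)) *
       (1 - Complex.exp (2 * Real.pi * Complex.I * ((k 1 : ℂ)) / d)) *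
       (1 - Complex.exp (2 * Real.pi * Complex.I * ((k 2 : ℂ)) / d))) ∧
    (hMat d k).det =
      ((-(1 / 4) * Real.sin (Real.pi * ((k 0 : ℝ) + (k 1 : ℝ) + (k 2 : ℝ)) / d) /
        (Real.sin (Real.pi * (k 0 : ℝ) / d) * Real.sin (Real.pi * (k 1 : ℝ) / d) *
         Real.sin (Real.pi * (k 2 : ℝ) / d)) : ℝ) : ℂ) :=
  det_hMat_general d k hk
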